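/- arXiv:2412.15688 — 3 statements merged into one kernel-verified Lean document; each statement's English description precedes it below -/
import Mathlib

section
/- For all natural numbers n ≥ 1 and m ≥ 3 and every integer i with 0 ≤ i ≤ n, the number of connected edge cover sets of the generalized friendship graph F_{n,m} of cardinality mn − i equals binomial(n, i) · m^i; moreover F_{n,m} has no connected edge cover sets of cardinality outside the range [mn − n, mn]. -/
/-- `S` is a connected edge cover set of `G`: every edge of `S` is an edge of `G`,
every vertex of `G` is incident with at least one edge of `S`, and the subgraph
induced by the edges of `S` is connected. -/
def IsConnectedEdgeCover {V : Type*} (G : SimpleGraph V) (S : Finset (Sym2 V)) : Prop :=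
  (∀ e ∈ S, e ∈ G.edgeSet) ∧ (∀ v : V, ∃ e ∈ S, v ∈ e) ∧
    (SimpleGraph.fromEdgeSet (↑S : Set (Sym2 V))).Connected

/-- `eC G i` is the number of connected edge cover sets of `G` of cardinality `i`. -/
noncomputable def eC {V : Type*} [Fintype V] (G : SimpleGraph V) (i : ℕ) : ℕ :=
  Nat.card {S : Finset (Sym2 V) // S.card = i ∧ IsConnectedEdgeCover G S}

/-- `rhoC G` is the connected edge cover number of `G`: the minimum cardinality of a
connected edge cover set of `G`. -/
noncomputable def rhoC {V : Type*} [Fintype V] (G : SimpleGraph V) : ℕ :=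
  sInf {k | ∃ S : Finset (Sym2 V), IsConnectedEdgeCover G S ∧ S.card = k}

/-- The generalized friendship graph `F_{n,m}`: `n` cycles of length `m` meeting at a
common vertex (the vertex `none`); the vertex `some (j, k)` is the `(k+1)`-st vertex
(after the centre) of the `j`-th cycle. -/
def friendshipGraph (n m : ℕ) : SimpleGraph (Option (Fin n × Fin (m - 1))) :=
  SimpleGraph.fromRel (fun a b =>
    match a, b with
    | none, some (_, k) => (k : ℕ) = 0 ∨ (k : ℕ) = m - 2
    | some (j, k), some (j', k') => j = j' ∧ (k' : ℕ) = (k : ℕ) + 1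
    | _, _ => False)


/-!
Number the edges of the `j`-th cycle `0, …, m - 1` from the centre round to the centre. An edge
set `S` of `F_{n,m}` is a connected edge cover exactly when it omits at most one edge of each
cycle: omitting one edge leaves a path through the centre, while omitting two edges `t < t'` of a
cycle cuts the vertices strictly between them off the centre. So connected edge covers correspond
to partial functions `g : Fin n → Option (Fin m)` (the omitted edge of each cycle, if any), and the
cover has `m n - i` edges when `g` is defined at `i` cycles; there are `(n choose i) m^i` such `g`.
-/

open Finset SimpleGraph

section OptionValuedFunctions

variable {ι α : Type*} [Fintype ι] [Fintype α]

def optionSupport (g : ι → Option α) : Finset ι := {j | (g j).isSome}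

theorem card_filter_eq_some_eq_card_optionSupport [DecidableEq α] (g : ι → Option α) :
    #{e : ι × α | g e.1 = some e.2} = #(optionSupport g) := by
  simp only [card_filter, optionSupport, Fintype.sum_prod_type]
  refine sum_congr rfl fun j _ => ?_
  rcases Option.eq_none_or_eq_some (g j) with h | ⟨a, h⟩ <;> simp [h]

variable [DecidableEq ι]

theorem card_filter_optionSupport_eq (A : Finset ι) :
    #{g : ι → Option α | optionSupport g = A} = Fintype.card α ^ #A := by
  have : ({g : ι → Option α | optionSupport g = A} : Finset _) =
      Fintype.piFinset fun j => if j ∈ A then univ.map Function.Embedding.some else {none} := by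
    ext g
    simp only [optionSupport, Finset.ext_iff, mem_filter, mem_univ, true_and,
      Fintype.mem_piFinset]
    refine forall_congr' fun j => ?_
    split_ifs with h <;> cases g j <;> simp [h]
  simp only [this, Fintype.card_piFinset, apply_ite card, card_map, card_univ, card_singleton,
    prod_ite_mem, univ_inter, prod_const]

theorem card_filter_card_optionSupport_eq (i : ℕ) :
    #{g : ι → Option α | #(optionSupport g) = i} =
      (Fintype.card ι).choose i * Fintype.card α ^ i := by
  rw [card_eq_sum_card_fiberwise (f := optionSupport) (t := powersetCard i univ)
      (fun g hg => by simpa using hg), sum_congr rfl (g := fun _ => Fintype.card α ^ i),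
    sum_const, card_powersetCard, card_univ, smul_eq_mul]
  intro A hA
  rw [mem_powersetCard_univ] at hA
  rw [filter_filter, ← hA, ← card_filter_optionSupport_eq A]
  refine congrArg card (filter_congr fun g _ => ?_)
  exact and_iff_right_of_imp fun h => h ▸ rfl

end OptionValuedFunctions

namespace SimpleGraph

variable {V : Type*} {G : SimpleGraph V}

theorem reachable_of_succ_of_le {f : ℕ → V} {a b : ℕ} (hab : a ≤ b)
    (h : ∀ t ∈ Set.Ico a b, G.Reachable (f t) (f (t + 1))) : G.Reachable (f a) (f b) := by
  rw [reachable_iff_reflTransGen]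
  exact Relation.ReflTransGen.lift' f (fun _ _ => (reachable_iff_reflTransGen _ _).1) a b
    (reflTransGen_of_succ_of_le (fun i j => G.Reachable (f i) (f j)) (by simpa using h) hab)

theorem reachable_fromEdgeSet_of_mem {s : Set (Sym2 V)} {x y : V} (h : s(x, y) ∈ s) :
    (fromEdgeSet s).Reachable x y := by
  by_cases hxy : x = y
  · exact hxy ▸ Reachable.refl x
  · exact Adj.reachable ⟨h, hxy⟩

end SimpleGraph

theorem isConnectedEdgeCover_of_connected {V : Type*} [Nontrivial V] {G : SimpleGraph V}
    {S : Finset (Sym2 V)} (hSG : ∀ e ∈ S, e ∈ G.edgeSet)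
    (hS : (fromEdgeSet (↑S : Set (Sym2 V))).Connected) : IsConnectedEdgeCover G S := by
  refine ⟨hSG, fun v => ?_, hS⟩
  obtain ⟨w, hvw⟩ := hS.preconnected.exists_adj_of_nontrivial v
  exact ⟨s(v, w), hvw.1, Sym2.mem_mk_left v w⟩

namespace friendshipGraph

variable {n m : ℕ}

variable (m) in
/-- Position `p` on the `j`-th cycle: positions `0` and `m` are the centre, position `p` with
`0 < p < m` is the vertex `some (j, p - 1)`, and positions beyond `m` are junk (`none`). -/
def cycleVertex (j : Fin n) (p : ℕ) : Option (Fin n × Fin (m - 1)) :=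
  if h : 0 < p ∧ p < m then some (j, ⟨p - 1, by omega⟩) else none

def cycleEdge (j : Fin n) (t : Fin m) : Sym2 (Option (Fin n × Fin (m - 1))) :=
  s(cycleVertex m j t, cycleVertex m j (t + 1))

theorem cycleVertex_zero (j : Fin n) : cycleVertex m j 0 = none := by
  simp [cycleVertex]

theorem cycleVertex_self (j : Fin n) : cycleVertex m j m = none := by
  simp [cycleVertex]

theorem cycleVertex_succ (j : Fin n) (k : Fin (m - 1)) :
    cycleVertex m j (k + 1) = some (j, k) := by
  rw [cycleVertex, dif_pos (by omega)]
  simp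

theorem cycleVertex_eq_cycleVertex_iff {j j' : Fin n} {p q : ℕ} (hp : 0 < p ∧ p < m) :
    cycleVertex m j' q = cycleVertex m j p ↔ j' = j ∧ q = p := by
  unfold cycleVertex
  split_ifs <;> simp [Fin.ext_iff] <;> omega

theorem cycleEdge_injective (hm : 3 ≤ m) :
    Function.Injective fun e : Fin n × Fin m => cycleEdge e.1 e.2 := by
  rintro ⟨j, t⟩ ⟨j', t'⟩ h
  simp only [cycleEdge, cycleVertex, Sym2.eq_iff] at h
  split_ifs at h <;> simp_all [Prod.ext_iff, Fin.ext_iff] <;> omega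

theorem adj_cycleVertex (hm : 3 ≤ m) (j : Fin n) (t : Fin m) :
    (friendshipGraph n m).Adj (cycleVertex m j t) (cycleVertex m j (t + 1)) := by
  have := t.isLt
  unfold cycleVertex
  split_ifs <;> simp [friendshipGraph, Prod.ext_iff, Fin.ext_iff] <;> omega

theorem mem_edgeSet_iff (hm : 3 ≤ m) {e : Sym2 (Option (Fin n × Fin (m - 1)))} :
    e ∈ (friendshipGraph n m).edgeSet ↔ ∃ j t, cycleEdge j t = e := by
  induction e using Sym2.ind with | _ x y => ?_
  refine ⟨fun h => ?_, fun ⟨j, t, h⟩ => h ▸ adj_cycleVertex hm j t⟩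
  rcases x with _ | ⟨j, k⟩ <;> rcases y with _ | ⟨j', k'⟩ <;>
    simp only [friendshipGraph, mem_edgeSet, fromRel_adj, ne_eq, reduceCtorEq, not_false_eq_true,
      or_false, false_or, true_and, Option.some.injEq, Prod.mk.injEq, not_and, Sym2.mk_isDiag_iff,
      not_mem_edgeSet_of_isDiag] at h
  · rcases h with h | h
    · exact ⟨j', ⟨0, by omega⟩, by simp [cycleEdge, cycleVertex, Fin.ext_iff]; omega⟩
    · exact ⟨j', ⟨m - 1, by omega⟩, by simp [cycleEdge, cycleVertex, Fin.ext_iff]; omega⟩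
  · rcases h with h | h
    · exact ⟨j, ⟨0, by omega⟩, by simp [cycleEdge, cycleVertex, Fin.ext_iff]; omega⟩
    · exact ⟨j, ⟨m - 1, by omega⟩, by simp [cycleEdge, cycleVertex, Fin.ext_iff]; omega⟩
  · rcases h.2 with ⟨rfl, h⟩ | ⟨rfl, h⟩
    · exact ⟨j, ⟨k + 1, by omega⟩, by simp [cycleEdge, cycleVertex, Fin.ext_iff]; omega⟩
    · exact ⟨j', ⟨k' + 1, by omega⟩, by simp [cycleEdge, cycleVertex, Fin.ext_iff]; omega⟩

variable (m) in
/-- `g j = some t` means that edge `t` of cycle `j` is left out. -/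
def keptEdges (g : Fin n → Option (Fin m)) : Finset (Sym2 (Option (Fin n × Fin (m - 1)))) :=
  image (fun e => cycleEdge e.1 e.2) {e : Fin n × Fin m | g e.1 ≠ some e.2}

theorem cycleEdge_mem_keptEdges_iff (hm : 3 ≤ m) {g : Fin n → Option (Fin m)} {j : Fin n}
    {t : Fin m} : cycleEdge j t ∈ keptEdges m g ↔ g j ≠ some t := by
  rw [keptEdges, (cycleEdge_injective hm).mem_finset_image (a := (j, t))]
  simp

theorem card_keptEdges (hm : 3 ≤ m) (g : Fin n → Option (Fin m)) :
    #(keptEdges m g) = m * n - #(optionSupport g) := by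
  rw [keptEdges, card_image_of_injective _ (cycleEdge_injective hm),
    ← card_filter_eq_some_eq_card_optionSupport, filter_not,
    card_sdiff_of_subset (filter_subset _ _), card_univ, Fintype.card_prod, Fintype.card_fin,
    Fintype.card_fin, mul_comm]

theorem keptEdges_injective (hm : 3 ≤ m) : Function.Injective (keptEdges (n := n) m) := by
  intro g g' h
  funext j
  refine Option.ext fun t => not_iff_not.mp ?_
  simpa [cycleEdge_mem_keptEdges_iff hm] using congrArg (cycleEdge j t ∈ ·) h

theorem reachable_none_of_keptEdges (hm : 3 ≤ m) (g : Fin n → Option (Fin m))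
    (x : Option (Fin n × Fin (m - 1))) : (fromEdgeSet ↑(keptEdges m g)).Reachable x none := by
  obtain _ | ⟨j, k⟩ := x
  · rfl
  have step (t : Fin m) (ht : g j ≠ some t) : (fromEdgeSet ↑(keptEdges m g)).Reachable
      (cycleVertex m j t) (cycleVertex m j (t + 1)) :=
    reachable_fromEdgeSet_of_mem (mem_coe.2 ((cycleEdge_mem_keptEdges_iff hm).2 ht))
  rw [← cycleVertex_succ]
  by_cases hdown : ∀ t : Fin m, (t : ℕ) ≤ k → g j ≠ some t
  · have := reachable_of_succ_of_le (f := cycleVertex m j) (Nat.zero_le (k + 1)) fun t ht =>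
      step ⟨t, by grind⟩ (hdown ⟨t, by grind⟩ (by grind))
    rwa [cycleVertex_zero, reachable_comm] at this
  · push Not at hdown
    obtain ⟨t₀, ht₀, hg⟩ := hdown
    have := reachable_of_succ_of_le (f := cycleVertex m j) (a := k + 1) (b := m) (by omega) fun t ht =>
      step ⟨t, ht.2⟩ (by grind)
    rwa [cycleVertex_self] at this

theorem isConnectedEdgeCover_keptEdges (hn : 1 ≤ n) (hm : 3 ≤ m) (g : Fin n → Option (Fin m)) :
    IsConnectedEdgeCover (friendshipGraph n m) (keptEdges m g) := by
  have : Nonempty (Fin n × Fin (m - 1)) := ⟨(⟨0, hn⟩, ⟨0, by omega⟩)⟩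
  refine isConnectedEdgeCover_of_connected (fun e he => ?_) ((connected_iff _).2
    ⟨fun x y => (reachable_none_of_keptEdges hm g x).trans
      (reachable_none_of_keptEdges hm g y).symm, ⟨none⟩⟩)
  obtain ⟨⟨j, t⟩, -, rfl⟩ := mem_image.1 he
  exact (mem_edgeSet_iff hm).2 ⟨j, t, rfl⟩

variable (m) in
def arc (j : Fin n) (a b : ℕ) : Set (Option (Fin n × Fin (m - 1))) :=
  cycleVertex m j '' Set.Ioc a b

theorem mem_arc_of_mem_arc {S : Finset (Sym2 (Option (Fin n × Fin (m - 1))))} (hm : 3 ≤ m)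
    (hSG : ∀ e ∈ S, e ∈ (friendshipGraph n m).edgeSet) {j : Fin n} {t t' : Fin m}
    (ht : cycleEdge j t ∉ S) (ht' : cycleEdge j t' ∉ S) {x y : Option (Fin n × Fin (m - 1))}
    (hxy : s(x, y) ∈ S) (hx : x ∈ arc m j t t') : y ∈ arc m j t t' := by
  obtain ⟨p, ⟨htp, hpt'⟩, rfl⟩ := hx
  obtain ⟨j', t'', he⟩ := (mem_edgeSet_iff hm).1 (hSG _ hxy)
  have hp : 0 < p ∧ p < m := by omega
  have hmem : cycleEdge j' t'' ∈ S := he ▸ hxy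
  rcases Sym2.eq_iff.1 he with ⟨hx, rfl⟩ | ⟨rfl, hx⟩
  · obtain ⟨rfl, hpt⟩ := (cycleVertex_eq_cycleVertex_iff hp).1 hx
    have : t'' ≠ t' := by rintro rfl; exact ht' hmem
    exact ⟨t'' + 1, ⟨by omega, by grind⟩, rfl⟩
  · obtain ⟨rfl, hpt⟩ := (cycleVertex_eq_cycleVertex_iff hp).1 hx
    have : t'' ≠ t := by rintro rfl; exact ht hmem
    exact ⟨t'', ⟨by grind, by omega⟩, rfl⟩

theorem eq_of_cycleEdge_notMem {S : Finset (Sym2 (Option (Fin n × Fin (m - 1))))} (hm : 3 ≤ m)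
    (hS : IsConnectedEdgeCover (friendshipGraph n m) S) {j : Fin n} {t t' : Fin m}
    (ht : cycleEdge j t ∉ S) (ht' : cycleEdge j t' ∉ S) : t = t' := by
  suffices key : ∀ {t t' : Fin m}, cycleEdge j t ∉ S → cycleEdge j t' ∉ S → ¬t < t' from
    le_antisymm (not_lt.1 (key ht' ht)) (not_lt.1 (key ht ht'))
  intro t t' ht ht' hlt
  have hcentre : none ∉ arc m j t t' := by
    rintro ⟨p, hp, h⟩
    simp only [cycleVertex, dite_eq_right_iff, reduceCtorEq, imp_false] at h
    grind
  obtain ⟨w⟩ := hS.2.2.preconnected (cycleVertex m j (t + 1)) none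
  obtain ⟨d, -, hd, hd'⟩ := w.exists_boundary_dart (arc m j t t') ⟨t + 1, ⟨by omega, hlt⟩, rfl⟩
    hcentre
  exact hd' (mem_arc_of_mem_arc hm hS.1 ht ht' d.adj.1 hd)

theorem exists_keptEdges_eq {S : Finset (Sym2 (Option (Fin n × Fin (m - 1))))} (hm : 3 ≤ m)
    (hS : IsConnectedEdgeCover (friendshipGraph n m) S) :
    ∃ g : Fin n → Option (Fin m), keptEdges m g = S := by
  classical
  refine ⟨fun j => if h : ∃ t, cycleEdge j t ∉ S then some h.choose else none, ?_⟩
  ext e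
  constructor
  · intro he
    obtain ⟨⟨j, t⟩, hg, rfl⟩ := mem_image.1 he
    by_contra ht
    have hex : ∃ t, cycleEdge j t ∉ S := ⟨t, ht⟩
    simp only [mem_filter, mem_univ, true_and, dif_pos hex] at hg
    exact hg (congrArg some (eq_of_cycleEdge_notMem hm hS hex.choose_spec ht))
  · intro he
    obtain ⟨j, t, rfl⟩ := (mem_edgeSet_iff hm).1 (hS.1 e he)
    refine (cycleEdge_mem_keptEdges_iff hm).2 fun hg => ?_
    split_ifs at hg with h
    exact h.choose_spec (Option.some_injective _ hg ▸ he)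

theorem eC_eq_card (hn : 1 ≤ n) (hm : 3 ≤ m) (k : ℕ) :
    eC (friendshipGraph n m) k =
      #{g : Fin n → Option (Fin m) | m * n - #(optionSupport g) = k} := by
  let f (g : {g : Fin n → Option (Fin m) // #(keptEdges m g) = k}) :
      {S // #S = k ∧ IsConnectedEdgeCover (friendshipGraph n m) S} :=
    ⟨keptEdges m g, g.2, isConnectedEdgeCover_keptEdges hn hm g⟩
  have hf : Function.Bijective f := by
    refine ⟨fun g g' h => Subtype.ext (keptEdges_injective hm (congrArg Subtype.val h)), ?_⟩
    rintro ⟨S, hk, hS⟩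
    obtain ⟨g, rfl⟩ := exists_keptEdges_eq hm hS
    exact ⟨⟨g, hk⟩, rfl⟩
  rw [eC, ← Nat.card_congr (Equiv.ofBijective f hf), Nat.card_eq_fintype_card,
    Fintype.card_subtype]
  simp only [card_keptEdges hm]

end friendshipGraph

open friendshipGraph in
theorem stmt4 (n m : ℕ) (hn : 1 ≤ n) (hm : 3 ≤ m) :
    (∀ i : ℕ, i ≤ n →
      eC (friendshipGraph n m) (m * n - i) = n.choose i * m ^ i) ∧
    (∀ j : ℕ, j < m * n - n ∨ m * n < j → eC (friendshipGraph n m) j = 0) := by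
  have hsupp (g : Fin n → Option (Fin m)) : #(optionSupport g) ≤ n := by
    simpa using card_le_univ (optionSupport g)
  have hn_le : n ≤ m * n := Nat.le_mul_of_pos_left n (by omega)
  refine ⟨fun i hi => ?_, fun j hj => ?_⟩
  · have hcount := card_filter_card_optionSupport_eq (ι := Fin n) (α := Fin m) i
    rw [Fintype.card_fin, Fintype.card_fin] at hcount
    rw [eC_eq_card hn hm, ← hcount]
    refine congrArg card (filter_congr fun g _ => ?_)
    have := hsupp g
    omega
  · rw [eC_eq_card hn hm, card_eq_zero, filter_eq_empty_iff]
    intro g _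
    have := hsupp g
    omega
end

section
/- Let G be a simple graph of order n such that e_c(G, i) = e_c(K_n, i) for every i (that is, E_c(G,x) = E_c(K_n,x)). Then G is isomorphic to the complete graph K_n. -/
/-!
The edge set of `K_n` (`n ≥ 2`) is a connected edge cover with `n.choose 2` edges, so
`e_c(K_n, n.choose 2) = 1`. Hence `G` has a connected edge cover with `n.choose 2` edges;
these are edges of `G`, and a graph on `n` vertices with `n.choose 2` edges is complete.
-/

open Finset SimpleGraph

namespace SimpleGraph

variable {V : Type*}

theorem eq_top_of_card_choose_two_le_card_edgeFinset [Fintype V] [DecidableEq V]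
    {G : SimpleGraph V} [Fintype G.edgeSet]
    (h : (Fintype.card V).choose 2 ≤ #G.edgeFinset) : G = ⊤ := by
  rw [← edgeFinset_inj]
  exact eq_of_subset_of_card_le (edgeFinset_mono le_top)
    (card_edgeFinset_top_eq_card_choose_two.trans_le h)

theorem Connected.isConnectedEdgeCover_edgeFinset [Nontrivial V] {G : SimpleGraph V}
    [Fintype G.edgeSet] (hG : G.Connected) : IsConnectedEdgeCover G G.edgeFinset := by
  refine ⟨fun e he ↦ mem_edgeFinset.mp he, fun v ↦ ?_, ?_⟩
  · obtain ⟨w, hvw⟩ := hG.preconnected.exists_adj_of_nontrivial v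
    exact ⟨s(v, w), mem_edgeFinset.mpr hvw, Sym2.mem_mk_left v w⟩
  · rwa [coe_edgeFinset, fromEdgeSet_edgeSet]

end SimpleGraph

theorem IsConnectedEdgeCover.card_le_card_edgeFinset {V : Type*} {G : SimpleGraph V}
    [Fintype G.edgeSet] {S : Finset (Sym2 V)} (hS : IsConnectedEdgeCover G S) :
    #S ≤ #G.edgeFinset :=
  card_le_card fun e he ↦ mem_edgeFinset.mpr (hS.1 e he)

theorem eC_pos_iff {V : Type*} [Fintype V] {G : SimpleGraph V} {i : ℕ} :
    0 < eC G i ↔ ∃ S : Finset (Sym2 V), #S = i ∧ IsConnectedEdgeCover G S := by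
  rw [eC, Nat.card_pos_iff]
  simp only [nonempty_subtype, and_iff_left (Subtype.finite)]

theorem stmt5 {V : Type*} [Fintype V] (G : SimpleGraph V) (n : ℕ)
    (hn : Fintype.card V = n)
    (h : ∀ i : ℕ, eC G i = eC (⊤ : SimpleGraph (Fin n)) i) :
    Nonempty (G ≃g (⊤ : SimpleGraph (Fin n))) := by
  classical
  suffices hG : G = ⊤ by
    subst hG
    exact ⟨Iso.completeGraph (Fintype.equivFinOfCardEq hn)⟩
  rcases subsingleton_or_nontrivial V with hV | hV
  · exact Subsingleton.elim _ _
  have : Nontrivial (Fin n) := Fin.nontrivial_iff_two_le.mpr (hn ▸ Fintype.one_lt_card)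
  have hKn : 0 < eC (⊤ : SimpleGraph (Fin n)) (n.choose 2) :=
    eC_pos_iff.mpr ⟨_, by rw [card_edgeFinset_top_eq_card_choose_two, Fintype.card_fin],
      connected_top.isConnectedEdgeCover_edgeFinset⟩
  obtain ⟨S, hScard, hS⟩ := eC_pos_iff.mp ((h _).symm ▸ hKn)
  exact eq_top_of_card_choose_two_le_card_edgeFinset (hn ▸ hScard ▸ hS.card_le_card_edgeFinset)
end

section
/- For every natural number n ≥ 4 and every integer i ≥ 1, the number of connected edge cover sets of the cycle C_n of cardinality i equals the number of connected edge cover sets of the cycle C_{n−1} of cardinality i−1, plus 1 if i = n−1 and plus 0 otherwise; that is, E_c(C_n, x) = x · E_c(C_{n−1}, x) + x^{n−1}. -/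
/-! A connected spanning subgraph of a graph on `n` vertices has at least `n - 1` edges, and
deleting an edge of `C_n` leaves it connected, since every edge lies on its Hamiltonian cycle.
So the connected edge cover sets of `C_n` are exactly the sets of at least `n - 1` of its `n`
edges: `e_c(C_n, i) = (n choose i)` for `i ≥ n - 1` and `0` otherwise, and the recurrence is
Pascal's rule. -/

open SimpleGraph Finset

section ConnectedEdgeCover

variable {V : Type*} {G : SimpleGraph V} {S : Finset (Sym2 V)}

lemma isConnectedEdgeCover_iff [Nontrivial V] :
    IsConnectedEdgeCover G S ↔
      (S : Set (Sym2 V)) ⊆ G.edgeSet ∧ (fromEdgeSet (S : Set (Sym2 V))).Connected := by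
  refine ⟨fun ⟨hsub, _, hconn⟩ ↦ ⟨hsub, hconn⟩, fun ⟨hsub, hconn⟩ ↦ ⟨hsub, fun v ↦ ?_, hconn⟩⟩
  obtain ⟨u, hvu⟩ := hconn.preconnected.exists_adj_of_nontrivial v
  exact ⟨s(v, u), ((fromEdgeSet_adj _).mp hvu).1, Sym2.mem_mk_left v u⟩

variable [Fintype V]

lemma card_le_card_add_one_of_connected_fromEdgeSet
    (h : (fromEdgeSet (S : Set (Sym2 V))).Connected) : Fintype.card V ≤ #S + 1 := by
  have hle : Nat.card (fromEdgeSet (S : Set (Sym2 V))).edgeSet ≤ #S := by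
    rw [edgeSet_fromEdgeSet, Nat.card_coe_set_eq, ← Set.ncard_coe_finset S]
    exact Set.ncard_le_ncard Set.sdiff_subset S.finite_toSet
  have := h.card_vert_le_card_edgeSet_add_one
  rw [Nat.card_eq_fintype_card] at this
  omega

open Classical in
lemma eC_eq_card_filter [Fintype G.edgeSet] (i : ℕ) :
    eC G i = #{S ∈ G.edgeFinset.powersetCard i | IsConnectedEdgeCover G S} := by
  rw [eC, ← Nat.card_eq_finsetCard]
  refine Nat.card_congr (Equiv.subtypeEquivRight fun S ↦ ?_)
  simp only [mem_filter, mem_powersetCard]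
  exact ⟨fun ⟨hcard, hS⟩ ↦ ⟨⟨fun e he ↦ mem_edgeFinset.mpr (hS.1 e he), hcard⟩, hS⟩,
    fun ⟨⟨_, hcard⟩, hS⟩ ↦ ⟨hcard, hS⟩⟩

end ConnectedEdgeCover

namespace SimpleGraph.cycleGraph

variable {n : ℕ}

lemma card_edgeFinset : #(cycleGraph (n + 3)).edgeFinset = n + 3 := by
  have := (cycleGraph (n + 3)).sum_degrees_eq_twice_card_edges
  simp only [cycleGraph_degree_three_le, sum_const, card_univ, Fintype.card_fin,
    smul_eq_mul] at this
  omega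

lemma isEulerian_cycle : (cycle n).IsEulerian := by
  classical
  have hsub : (cycle n).edges.toFinset ⊆ (cycleGraph (n + 3)).edgeFinset := fun e he ↦ by
    simpa using (cycle n).edges_subset_edgeSet (List.mem_toFinset.mp he)
  have hcard : #(cycleGraph (n + 3)).edgeFinset ≤ #(cycle n).edges.toFinset := by
    rw [List.toFinset_card_of_nodup isCycle_cycle.isTrail.edges_nodup, Walk.length_edges,
      length_cycle, card_edgeFinset]
  refine isCycle_cycle.isTrail.isEulerian_of_forall_mem fun e he ↦ ?_
  rw [← List.mem_toFinset, eq_of_subset_of_card_le hsub hcard]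
  simpa using he

lemma connected_deleteEdges {e : Sym2 (Fin (n + 3))} (he : e ∈ (cycleGraph (n + 3)).edgeSet) :
    ((cycleGraph (n + 3)).deleteEdges {e}).Connected := by
  induction e using Sym2.ind with
  | _ u v =>
    refine cycleGraph_connected.connected_delete_edge_of_not_isBridge fun hb ↦ ?_
    exact hb.notMem_edges_of_isCycle isCycle_cycle (isEulerian_cycle.mem_edges_iff.mpr he)

end SimpleGraph.cycleGraph

lemma isConnectedEdgeCover_cycleGraph_iff {n : ℕ} {S : Finset (Sym2 (Fin (n + 3)))} :
    IsConnectedEdgeCover (cycleGraph (n + 3)) S ↔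
      S ⊆ (cycleGraph (n + 3)).edgeFinset ∧ n + 2 ≤ #S := by
  set E := (cycleGraph (n + 3)).edgeFinset
  rw [isConnectedEdgeCover_iff, ← coe_edgeFinset, coe_subset]
  refine and_congr_right fun hsub ↦ ⟨fun hconn ↦ ?_, fun hcard ↦ ?_⟩
  · simpa using card_le_card_add_one_of_connected_fromEdgeSet hconn
  have hmissing : #(E \ S) ≤ 1 := by
    rw [card_sdiff_of_subset hsub, cycleGraph.card_edgeFinset]
    omega
  obtain ⟨e, he, hsd⟩ : ∃ e ∈ E, E \ S ⊆ {e} := by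
    rcases (E \ S).eq_empty_or_nonempty with h | ⟨e, he⟩
    · exact ⟨s(0, 1), by simp [E, cycleGraph_adj], by simp [h]⟩
    · exact ⟨e, (mem_sdiff.mp he).1,
        fun f hf ↦ mem_singleton.mpr (card_le_one.mp hmissing f hf e he)⟩
  refine (cycleGraph.connected_deleteEdges (mem_edgeFinset.mp he)).mono ?_
  rw [← fromEdgeSet_edgeSet (cycleGraph (n + 3)), deleteEdges_fromEdgeSet]
  refine fromEdgeSet_mono fun f ⟨hf, hfe⟩ ↦ ?_
  by_contra hfS
  exact hfe (mem_singleton.mp (hsd (mem_sdiff.mpr ⟨mem_edgeFinset.mpr hf, hfS⟩)))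

lemma eC_cycleGraph (n i : ℕ) :
    eC (cycleGraph (n + 3)) i = if n + 2 ≤ i then (n + 3).choose i else 0 := by
  classical
  rw [eC_eq_card_filter]
  split_ifs with hi
  · rw [filter_true_of_mem, card_powersetCard, cycleGraph.card_edgeFinset]
    intro S hS
    obtain ⟨hsub, hcard⟩ := mem_powersetCard.mp hS
    exact isConnectedEdgeCover_cycleGraph_iff.mpr ⟨hsub, hcard ▸ hi⟩
  · rw [card_eq_zero, filter_eq_empty_iff]
    intro S hS hcover
    exact hi ((mem_powersetCard.mp hS).2 ▸ (isConnectedEdgeCover_cycleGraph_iff.mp hcover).2)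

theorem stmt8 (n : ℕ) (hn : 4 ≤ n) (i : ℕ) (hi : 1 ≤ i) :
    eC (SimpleGraph.cycleGraph n) i =
      eC (SimpleGraph.cycleGraph (n - 1)) (i - 1) + (if i = n - 1 then 1 else 0) := by
  obtain ⟨k, rfl⟩ : ∃ k, n = k + 4 := ⟨n - 4, by omega⟩
  obtain ⟨j, rfl⟩ : ∃ j, i = j + 1 := ⟨i - 1, by omega⟩
  rw [show k + 4 - 1 = k + 3 from rfl, Nat.add_sub_cancel, show k + 4 = (k + 1) + 3 from rfl,
    eC_cycleGraph, eC_cycleGraph, Nat.choose_succ_succ']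
  by_cases hj : k + 2 ≤ j
  · rw [if_pos (by omega), if_pos hj, Nat.add_left_cancel_iff]
    rcases (show j + 1 = k + 3 ∨ k + 3 < j + 1 by omega) with h | h
    · rw [if_pos h, h, Nat.choose_self]
    · rw [if_neg h.ne', Nat.choose_eq_zero_of_lt h]
  · rw [if_neg (by omega), if_neg hj, if_neg (by omega)]
end
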